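/- arXiv:2509.05257 — 2 statements merged into one kernel-verified Lean document; each statement's English description precedes it below -/
import Mathlib

section
/- A block matrix M = [[A, B], [B*, C]] is positive semidefinite if and only if A ≥ 0, (I − A A⁻¹) B = 0, and C ≥ B* A⁻¹ B, where A⁻¹ denotes the Moore–Penrose pseudoinverse. -/
open Matrix Kronecker
open scoped ComplexOrder

noncomputable section
attribute [local instance] Classical.propDecidable

/-- Moore–Penrose pseudoinverse of a square complex matrix. -/
def pinv {n : Type*} [Fintype n] [DecidableEq n] (A : Matrix n n ℂ) : Matrix n n ℂ :=
  if h : ∃ B : Matrix n n ℂ,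
      A * B * A = A ∧ B * A * B = B ∧ (A * B)ᴴ = A * B ∧ (B * A)ᴴ = B * A
  then h.choose else 0

/-- Positive semidefinite square root (junk value `0` if the matrix is not PSD). -/
def msqrt {n : Type*} [Fintype n] [DecidableEq n] (A : Matrix n n ℂ) : Matrix n n ℂ :=
  if h : A.PosSemidef then
    (h.1.eigenvectorUnitary : Matrix n n ℂ) * diagonal ((↑) ∘ (√·) ∘ h.1.eigenvalues) *
      (star h.1.eigenvectorUnitary : Matrix n n ℂ)
  else 0

/-- `sgn(X) = U sgn(Σ) V*` for an SVD `X = U Σ V*`; equivalently `X (X* X)^{-1/2}`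
with the Moore–Penrose pseudoinverse. -/
def msgn {n : Type*} [Fintype n] [DecidableEq n] (X : Matrix n n ℂ) : Matrix n n ℂ :=
  X * pinv (msqrt (Xᴴ * X))

/-- Matrix geometric mean `A # B = A^{1/2} (A^{-1/2} B A^{-1/2})^{1/2} A^{1/2}`
(with Moore–Penrose pseudoinverses). -/
def geo {n : Type*} [Fintype n] [DecidableEq n] (A B : Matrix n n ℂ) : Matrix n n ℂ :=
  msqrt A * msqrt (pinv (msqrt A) * B * pinv (msqrt A)) * msqrt A

/-- The unnormalized maximally entangled state `|Ω⟩ = ∑ i, |i⟩ ⊗ |i⟩`. -/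
def omegaVec (d : ℕ) : Fin d × Fin d → ℂ := fun p => if p.1 = p.2 then 1 else 0

/-- Reduced density matrix of `|C⟩⟨C|` on the first subsystem
(partial trace over the second subsystem). -/
def reducedA {d : ℕ} (C : Fin d × Fin d → ℂ) : Matrix (Fin d) (Fin d) ℂ :=
  Matrix.of fun i j => ∑ k, C (i, k) * star (C (j, k))

/-- Partial trace over the first subsystem of the operator `|D⟩⟨C|`. -/
def trA {d : ℕ} (D C : Fin d × Fin d → ℂ) : Matrix (Fin d) (Fin d) ℂ :=
  Matrix.of fun j l => ∑ i, D (i, j) * star (C (i, l))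

/-- `ℓ²→ℓ²` operator norm (largest singular value). -/
def opNorm {n : Type*} [Fintype n] [DecidableEq n] (A : Matrix n n ℂ) : ℝ :=
  ‖(Matrix.toEuclideanCLM (𝕜 := ℂ) A : EuclideanSpace ℂ n →L[ℂ] EuclideanSpace ℂ n)‖

/-- `P` is the orthogonal projection onto the image (column space) of `A`. -/
def IsOrthProjOnto {n : Type*} [Fintype n] [DecidableEq n] (P A : Matrix n n ℂ) : Prop :=
  Pᴴ = P ∧ P * P = P ∧ LinearMap.range P.mulVecLin = LinearMap.range A.mulVecLin

/-- `η` is the smallest nonzero eigenvalue of the Hermitian matrix `M`. -/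
def IsSmallestNonzeroEigenvalue {n : Type*} [Fintype n] [DecidableEq n]
    (M : Matrix n n ℂ) (η : ℝ) : Prop :=
  ∃ hM : M.IsHermitian, η ≠ 0 ∧ (∃ i, hM.eigenvalues i = η) ∧
    ∀ i, hM.eigenvalues i ≠ 0 → η ≤ hM.eigenvalues i

/-!
If `A * K = B`, the block matrix `[[A, B], [Bᴴ, C]]` is congruent, via the invertible
`[[1, K], [0, 1]]`, to `diag(A, C - Bᴴ * K)`. With `K = A⁺ * B` this is the whole converse
direction, and it gives the Schur complement in the forward direction once the range condition
`A * A⁺ * B = B` is known. That condition comes from positivity: if `A *ᵥ v = 0` then `(v, 0)` is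
isotropic for the block matrix, hence in its kernel, so `Bᴴ *ᵥ v = 0`; applying this to the
columns of `1 - A * A⁺`, which lie in `ker A`, gives `(1 - A * A⁺) * B = 0`.
-/

namespace Matrix

variable {m n 𝕜 : Type*} [RCLike 𝕜] [Fintype m] [Fintype n]

/-- The Moore–Penrose inverse of a Hermitian matrix is `cfc (·⁻¹)`, using `0⁻¹ = 0` on the
kernel. -/
theorem IsHermitian.exists_moorePenrose [DecidableEq n] {A : Matrix n n 𝕜} (hA : A.IsHermitian) :
    ∃ G : Matrix n n 𝕜,
      A * G * A = A ∧ G * A * G = G ∧ (A * G)ᴴ = A * G ∧ (G * A)ᴴ = G * A := by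
  have hcont (f : ℝ → ℝ) : ContinuousOn f (spectrum ℝ A) := A.finite_real_spectrum.continuousOn f
  have hmul (f g : ℝ → ℝ) : cfc f A * cfc g A = cfc (fun x ↦ f x * g x) A :=
    (cfc_mul f g A (hcont f) (hcont g)).symm
  have hid : cfc (fun x : ℝ ↦ x) A = A := cfc_id' ℝ A hA
  have hAG : A * cfc (fun x : ℝ ↦ x⁻¹) A = cfc (fun x : ℝ ↦ x * x⁻¹) A := by
    simpa only [hid] using hmul (fun x ↦ x) (·⁻¹)
  have hGA : cfc (fun x : ℝ ↦ x⁻¹) A * A = cfc (fun x : ℝ ↦ x⁻¹ * x) A := by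
    simpa only [hid] using hmul (·⁻¹) (fun x ↦ x)
  have hinv (x : ℝ) : x⁻¹ * x * x⁻¹ = x⁻¹ := by simpa only [inv_inv] using mul_inv_mul_cancel x⁻¹
  refine ⟨cfc (fun x : ℝ ↦ x⁻¹) A, ?_, ?_, hAG ▸ IsSelfAdjoint.cfc, hGA ▸ IsSelfAdjoint.cfc⟩
  · simpa only [hAG, hid, mul_inv_mul_cancel] using hmul (fun x ↦ x * x⁻¹) (fun x ↦ x)
  · simpa only [hGA, hinv] using hmul (fun x ↦ x⁻¹ * x) (·⁻¹)

theorem posSemidef_fromBlocks_zero_iff {A : Matrix m m 𝕜} {D : Matrix n n 𝕜} :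
    (fromBlocks A 0 0 D).PosSemidef ↔ A.PosSemidef ∧ D.PosSemidef := by
  refine ⟨fun h ↦ ⟨?_, ?_⟩, fun ⟨hA, hD⟩ ↦ .of_dotProduct_mulVec_nonneg ?_ fun x ↦ ?_⟩
  · exact h.submatrix Sum.inl
  · exact h.submatrix Sum.inr
  · exact hA.isHermitian.fromBlocks (by simp) hD.isHermitian
  · rw [fromBlocks_mulVec, ← Sum.elim_comp_inl_inr (star x), sumElim_dotProduct_sumElim]
    simp only [zero_mulVec, add_zero, zero_add]
    exact add_nonneg (hA.dotProduct_mulVec_nonneg (x ∘ Sum.inl))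
      (hD.dotProduct_mulVec_nonneg (x ∘ Sum.inr))

theorem posSemidef_fromBlocks_iff_of_mul_eq [DecidableEq m] [DecidableEq n]
    {A : Matrix m m 𝕜} {B K : Matrix m n 𝕜} (C : Matrix n n 𝕜)
    (hA : A.IsHermitian) (hK : A * K = B) :
    (fromBlocks A B Bᴴ C).PosSemidef ↔ A.PosSemidef ∧ (C - Bᴴ * K).PosSemidef := by
  set L : Matrix (m ⊕ n) (m ⊕ n) 𝕜 := fromBlocks 1 K 0 1
  have hKA : Kᴴ * A = Bᴴ := by rw [← hA.eq, ← conjTranspose_mul, hK]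
  have hcongr : fromBlocks A B Bᴴ C = star L * fromBlocks A 0 0 (C - Bᴴ * K) * L := by
    simp [L, star_eq_conjTranspose, fromBlocks_conjTranspose, fromBlocks_multiply, hK, hKA]
  have hL : IsUnit L := isUnit_fromBlocks_zero₂₁.mpr ⟨isUnit_one, isUnit_one⟩
  rw [hcongr, hL.posSemidef_star_left_conjugate_iff, posSemidef_fromBlocks_zero_iff]

theorem conjTranspose_mul_eq_zero_of_posSemidef_fromBlocks {l : Type*} [Fintype l]
    {A : Matrix m m 𝕜} {B : Matrix m n 𝕜} {C : Matrix n n 𝕜} {K : Matrix m l 𝕜}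
    (hM : (fromBlocks A B Bᴴ C).PosSemidef) (hK : A * K = 0) : Bᴴ * K = 0 := by
  refine ext_iff_mulVec.mpr fun v ↦ ?_
  set x : m ⊕ n → 𝕜 := Sum.elim (K *ᵥ v) 0
  have hx : star x ⬝ᵥ fromBlocks A B Bᴴ C *ᵥ x = 0 := by
    simp [x, fromBlocks_mulVec, mulVec_mulVec, hK, Function.star_sumElim]
  funext i
  simpa [x, fromBlocks_mulVec, mulVec_mulVec] using
    congrFun ((hM.dotProduct_mulVec_zero_iff x).mp hx) (Sum.inr i)

theorem mul_mul_eq_self_of_posSemidef_fromBlocks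
    {A G : Matrix m m 𝕜} {B : Matrix m n 𝕜} {C : Matrix n n 𝕜}
    (hM : (fromBlocks A B Bᴴ C).PosSemidef) (hAGA : A * G * A = A) (hAG : (A * G)ᴴ = A * G) :
    A * G * B = B := by
  have hA : A.IsHermitian := (hM.submatrix Sum.inl).isHermitian
  set Q : Matrix m m 𝕜 := 1 - A * G
  have hQ : Qᴴ = Q := by simp [Q, hAG]
  have hAQ : A * Q = 0 := by
    calc A * Q = (Q * A)ᴴ := by rw [conjTranspose_mul, hQ, hA.eq]
      _ = 0 := by simp [Q, Matrix.sub_mul, hAGA]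
  have hQB : Q * B = 0 := by
    rw [← hQ, ← conjTranspose_conjTranspose B, ← conjTranspose_mul,
      conjTranspose_mul_eq_zero_of_posSemidef_fromBlocks hM hAQ, conjTranspose_zero]
  rwa [Matrix.sub_mul, Matrix.one_mul, sub_eq_zero, eq_comm] at hQB

end Matrix

theorem pinv_spec {n : Type*} [Fintype n] [DecidableEq n] {A : Matrix n n ℂ}
    (hA : A.IsHermitian) :
    A * pinv A * A = A ∧ pinv A * A * pinv A = pinv A ∧
      (A * pinv A)ᴴ = A * pinv A ∧ (pinv A * A)ᴴ = pinv A * A := by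
  rw [pinv, dif_pos hA.exists_moorePenrose]
  exact hA.exists_moorePenrose.choose_spec

theorem schur_complement_psd_general {m n : Type*} [Fintype m] [Fintype n]
    [DecidableEq m]
    (A : Matrix m m ℂ) (B : Matrix m n ℂ) (C : Matrix n n ℂ) :
    (Matrix.fromBlocks A B Bᴴ C).PosSemidef ↔
      A.PosSemidef ∧ (1 - A * pinv A) * B = 0 ∧ (C - Bᴴ * pinv A * B).PosSemidef := by
  have hrange : (1 - A * pinv A) * B = 0 ↔ A * (pinv A * B) = B := by
    rw [Matrix.sub_mul, Matrix.one_mul, sub_eq_zero, Matrix.mul_assoc, eq_comm]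
  rw [hrange, Matrix.mul_assoc Bᴴ]
  constructor
  · intro hM
    have hA : A.IsHermitian := (hM.submatrix Sum.inl).isHermitian
    obtain ⟨hAGA, -, hAG, -⟩ := pinv_spec hA
    have hK : A * (pinv A * B) = B := by
      rw [← Matrix.mul_assoc, mul_mul_eq_self_of_posSemidef_fromBlocks hM hAGA hAG]
    obtain ⟨hApsd, hS⟩ := (posSemidef_fromBlocks_iff_of_mul_eq C hA hK).mp hM
    exact ⟨hApsd, hK, hS⟩
  · rintro ⟨hA, hK, hS⟩
    exact (posSemidef_fromBlocks_iff_of_mul_eq C hA.isHermitian hK).mpr ⟨hA, hS⟩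

theorem schur_complement_psd {m n : Type*} [Fintype m] [Fintype n]
    [DecidableEq m] [DecidableEq n]
    (A : Matrix m m ℂ) (B : Matrix m n ℂ) (C : Matrix n n ℂ) :
    (Matrix.fromBlocks A B Bᴴ C).PosSemidef ↔
      A.PosSemidef ∧ (1 - A * pinv A) * B = 0 ∧ (C - Bᴴ * pinv A * B).PosSemidef :=
  schur_complement_psd_general A B C
end
end

section
/- If X is invertible and A, B are positive definite, then X (A # B) X^{-1} = (X A X^{-1}) # (X B X^{-1}) when all conjugated matrices remain positive definite (e.g. when X is such that X A X^{-1} and X B X^{-1} are positive definite). -/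
open Matrix Kronecker
open scoped ComplexOrder

noncomputable section
attribute [local instance] Classical.propDecidable

/-!
On a matrix the spectrum is finite, so `cfc f a` is the value at `a` of a Lagrange interpolation
polynomial of `f`. Hence the functional calculus commutes with every algebra homomorphism,
star-preserving or not, as long as `a` and `φ a` both satisfy the predicate of the calculus.
Conjugation `M ↦ X M X⁻¹` is such a homomorphism; it therefore commutes with `msqrt` on positive
semidefinite matrices whose conjugates are again positive semidefinite, and with inversion, and
`A # B` is built from `A`, `B` by these operations.
-/

open Polynomial in
theorem Set.Finite.exists_polynomial_eqOn {F : Type*} [Field F] {s : Set F} (hs : s.Finite)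
    (f : F → F) : ∃ q : F[X], s.EqOn (fun x ↦ q.eval x) f := by
  classical
  refine ⟨Lagrange.interpolate hs.toFinset id f, fun x hx ↦ ?_⟩
  exact Lagrange.eval_interpolate_at_node (v := id) f (Set.injOn_id _) (hs.mem_toFinset.mpr hx)

theorem AlgHomClass.map_cfc_of_finite_spectrum {F R A B : Type*} {p : A → Prop} {q : B → Prop}
    [Field R] [StarRing R] [MetricSpace R] [IsTopologicalSemiring R] [ContinuousStar R]
    [Ring A] [StarRing A] [TopologicalSpace A] [Algebra R A] [ContinuousFunctionalCalculus R A p]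
    [Ring B] [StarRing B] [TopologicalSpace B] [Algebra R B] [ContinuousFunctionalCalculus R B q]
    [FunLike F A B] [AlgHomClass F R A B] (φ : F) (f : R → R) {a : A}
    (hfin : (spectrum R a).Finite) (ha : p a) (hφa : q (φ a)) :
    φ (cfc f a) = cfc f (φ a) := by
  obtain ⟨P, hP⟩ := hfin.exists_polynomial_eqOn f
  rw [cfc_congr hP.symm, cfc_congr (hP.symm.mono (AlgHom.spectrum_apply_subset φ a)),
    cfc_polynomial P a, cfc_polynomial P (φ a), Polynomial.aeval_algHom_apply]

section
variable {n : Type*} [Fintype n] [DecidableEq n]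
open scoped MatrixOrder

theorem msqrt_eq_cfc {A : Matrix n n ℂ} (hA : A.PosSemidef) : msqrt A = cfc Real.sqrt A := by
  rw [hA.1.cfc_eq, msqrt, dif_pos hA, IsHermitian.cfc, Unitary.conjStarAlgAut_apply]
  rfl

theorem posSemidef_msqrt (A : Matrix n n ℂ) : (msqrt A).PosSemidef := by
  by_cases hA : A.PosSemidef
  · rw [msqrt_eq_cfc hA, ← nonneg_iff_posSemidef]
    exact cfc_nonneg fun x _ ↦ Real.sqrt_nonneg x
  · rw [msqrt, dif_neg hA]
    exact .zero

theorem Matrix.PosDef.isUnit_msqrt {A : Matrix n n ℂ} (hA : A.PosDef) : IsUnit (msqrt A) := by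
  rw [msqrt_eq_cfc hA.posSemidef, isUnit_cfc_iff Real.sqrt A,
    hA.1.spectrum_real_eq_range_eigenvalues]
  rintro _ ⟨i, rfl⟩
  exact (Real.sqrt_pos.mpr (hA.eigenvalues_pos i)).ne'

theorem msqrt_map {F : Type*} [FunLike F (Matrix n n ℂ) (Matrix n n ℂ)]
    [AlgHomClass F ℝ (Matrix n n ℂ) (Matrix n n ℂ)] (φ : F) {A : Matrix n n ℂ}
    (hA : A.PosSemidef) (hφA : (φ A).PosSemidef) : msqrt (φ A) = φ (msqrt A) := by
  rw [msqrt_eq_cfc hA, msqrt_eq_cfc hφA]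
  exact (AlgHomClass.map_cfc_of_finite_spectrum φ _ A.finite_real_spectrum hA.1 hφA.1).symm

theorem pinv_eq_inv {A : Matrix n n ℂ} (hA : IsUnit A) : pinv A = A⁻¹ := by
  have hdet := (isUnit_iff_isUnit_det A).mp hA
  have hex : ∃ B : Matrix n n ℂ,
      A * B * A = A ∧ B * A * B = B ∧ (A * B)ᴴ = A * B ∧ (B * A)ᴴ = B * A :=
    ⟨A⁻¹, by simp only [mul_nonsing_inv _ hdet, nonsing_inv_mul _ hdet, one_mul,
      conjTranspose_one, and_self]⟩
  rw [pinv, dif_pos hex]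
  exact (inv_eq_right_inv (hA.mul_right_cancel (hex.choose_spec.1.trans (one_mul A).symm))).symm

theorem Matrix.PosSemidef.inv_mul_mul_inv {𝕜 : Type*} [RCLike 𝕜] {S B : Matrix n n 𝕜}
    (hS : S.IsHermitian) (hB : B.PosSemidef) : (S⁻¹ * B * S⁻¹).PosSemidef := by
  simpa only [hS.inv.eq] using hB.conjTranspose_mul_mul_same S⁻¹

theorem geo_map {F : Type*} [FunLike F (Matrix n n ℂ) (Matrix n n ℂ)]
    [AlgHomClass F ℝ (Matrix n n ℂ) (Matrix n n ℂ)] (φ : F) {A B : Matrix n n ℂ}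
    (hA : A.PosDef) (hB : B.PosSemidef) (hφA : (φ A).PosSemidef) (hφB : (φ B).PosSemidef) :
    geo (φ A) (φ B) = φ (geo A B) := by
  unfold geo
  set S := msqrt A
  have hS : IsUnit S := hA.isUnit_msqrt
  have hφS : msqrt (φ A) = φ S := msqrt_map φ hA.posSemidef hφA
  have hφSinv : (φ S)⁻¹ = φ S⁻¹ := by
    refine inv_eq_right_inv ?_
    rw [← map_mul, mul_nonsing_inv _ ((isUnit_iff_isUnit_det S).mp hS), map_one]
  have hinner : (S⁻¹ * B * S⁻¹).PosSemidef := .inv_mul_mul_inv (posSemidef_msqrt A).1 hB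
  have hφinner : (φ (S⁻¹ * B * S⁻¹)).PosSemidef := by
    rw [map_mul, map_mul, ← hφSinv, ← hφS]
    exact .inv_mul_mul_inv (posSemidef_msqrt _).1 hφB
  simp only [hφS, pinv_eq_inv hS, pinv_eq_inv (hS.map φ), hφSinv, ← map_mul,
    msqrt_map φ hinner hφinner]

end

theorem geo_mean_conj {n : Type*} [Fintype n] [DecidableEq n]
    (A B X : Matrix n n ℂ) (hA : A.PosDef) (hB : B.PosDef) (hX : IsUnit X)
    (h1 : (X * A * X⁻¹).PosDef) (h2 : (X * B * X⁻¹).PosDef) :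
    X * geo A B * X⁻¹ = geo (X * A * X⁻¹) (X * B * X⁻¹) := by
  obtain ⟨u, rfl⟩ := hX
  let φ := MulSemiringAction.toAlgEquiv ℝ (Matrix n n ℂ) (ConjAct.toConjAct u)
  have hφ (M : Matrix n n ℂ) : φ M = (u : Matrix n n ℂ) * M * (u : Matrix n n ℂ)⁻¹ := by
    simp [φ, ConjAct.units_smul_def, Matrix.coe_units_inv]
  simp only [← hφ] at h1 h2 ⊢
  exact (geo_map φ hA hB.posSemidef h1.posSemidef h2.posSemidef).symm
end
end
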